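/- Let L(x,ξ) be a loss function that is convex in x for every fixed ξ, and let F_β(x,η) = η + (1/(1-β)) E_ξ[max(L(x,ξ) - η, 0)] for β ∈ (0,1). Then F_β is jointly convex in (x,η). -/
import Mathlib


open MeasureTheory

theorem stmt_0 {n d : ℕ}
    (μ : Measure (Fin d → ℝ)) [IsProbabilityMeasure μ]
    (X : Set (Fin n → ℝ)) (hX : Convex ℝ X)
    (L : (Fin n → ℝ) → (Fin d → ℝ) → ℝ)
    (hL : ∀ ξ, ConvexOn ℝ X (fun x => L x ξ))
    (β : ℝ) (hβ : β ∈ Set.Ioo (0 : ℝ) 1)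
    (hint : ∀ x η, Integrable (fun ξ => max (L x ξ - η) 0) μ) :
    ConvexOn ℝ (X ×ˢ (Set.univ : Set ℝ))
      (fun p : (Fin n → ℝ) × ℝ =>
        p.2 + (1 / (1 - β)) * ∫ ξ, max (L p.1 ξ - p.2) 0 ∂μ) := by
  have hc : (0:ℝ) ≤ 1 / (1 - β) := by
    have : 0 < 1 - β := by linarith [hβ.2]
    positivity
  constructor
  · exact hX.prod convex_univ
  · rintro ⟨x, η⟩ ⟨hx, -⟩ ⟨y, η'⟩ ⟨hy, -⟩ a b ha hb hab
    simp only [Prod.smul_mk, Prod.mk_add_mk, smul_eq_mul]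
    -- pointwise inequality
    have hpt : ∀ ξ, max (L (a • x + b • y) ξ - (a * η + b * η')) 0
        ≤ a * max (L x ξ - η) 0 + b * max (L y ξ - η') 0 := by
      intro ξ
      have h1 : L (a • x + b • y) ξ ≤ a * L x ξ + b * L y ξ := by
        simpa using (hL ξ).2 hx hy ha hb hab
      have h2 : a * max (L x ξ - η) 0 + b * max (L y ξ - η') 0 ≥ 0 := by
        have := le_max_right (L x ξ - η) 0
        have := le_max_right (L y ξ - η') 0
        positivity
      rcases max_cases (L (a • x + b • y) ξ - (a * η + b * η')) 0 with ⟨he, hle⟩ | ⟨he, hlt⟩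
      · rw [he]
        have hax : a * (L x ξ - η) ≤ a * max (L x ξ - η) 0 :=
          mul_le_mul_of_nonneg_left (le_max_left _ _) ha
        have hay : b * (L y ξ - η') ≤ b * max (L y ξ - η') 0 :=
          mul_le_mul_of_nonneg_left (le_max_left _ _) hb
        nlinarith
      · rw [he]; exact h2
    have hInt : Integrable (fun ξ => a * max (L x ξ - η) 0 + b * max (L y ξ - η') 0) μ :=
      ((hint x η).const_mul a).add ((hint y η').const_mul b)
    have hile : (∫ ξ, max (L (a • x + b • y) ξ - (a * η + b * η')) 0 ∂μ)
        ≤ ∫ ξ, (a * max (L x ξ - η) 0 + b * max (L y ξ - η') 0) ∂μ :=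
      integral_mono (hint _ _) hInt hpt
    rw [integral_add ((hint x η).const_mul a) ((hint y η').const_mul b),
      integral_const_mul, integral_const_mul] at hile
    have := mul_le_mul_of_nonneg_left hile hc
    nlinarith [this]
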